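/- Let σ > 0, m ≥ 1 a natural number, θ ∈ ℝ, and let F : ℝ → ℝ be bounded and measurable. Let ε_1, …, ε_m be i.i.d. random variables each distributed as gaussianReal 0 σ² (formally, integrate over the m-fold product of gaussianReal 0 σ²). Then the Monte-Carlo gradient estimator g = (1/(m σ²)) · Σ_{k=1}^m ε_k · F(θ + ε_k) is an unbiased estimator of the gradient of the smoothed objective: its expectation equals the derivative at θ of the function θ ↦ ∫ F(θ + ε) d(gaussianReal 0 σ²)(ε). -/

import Mathlib

/-!
Writing `∫ F(t + ε) dN(0, v)(ε) = ∫ F(x) p_t(x) dx` with the Gaussian density `p_t` of mean `t`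
moves the parameter into the density, where `∂ₜ p_t(x) = (x - t)/v · p_t(x)`. Differentiating
under the integral (dominated by a Gaussian of variance `2v` for `t` near `θ`) gives the score
identity `d/dθ ∫ F(θ + ε) dN(0, v) = v⁻¹ ∫ ε F(θ + ε) dN(0, v)`. Each summand of the estimator has
this expectation, since every coordinate of the product measure is distributed as `N(0, v)`.
-/

open MeasureTheory ProbabilityTheory Real
open scoped NNReal

lemma hasDerivAt_gaussianPDFReal_mean (v : ℝ≥0) (x t : ℝ) :
    HasDerivAt (fun μ => gaussianPDFReal μ v x) ((x - t) / v * gaussianPDFReal t v x) t := by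
  have h := ((((hasDerivAt_id t).const_sub x).fun_pow 2).fun_neg.div_const
    (2 * (v : ℝ))).exp.const_mul (√(2 * π * v))⁻¹
  simp only [gaussianPDFReal]
  refine h.congr_deriv ?_
  simp only [id, Nat.cast_ofNat]
  ring

lemma abs_sub_mul_gaussianPDFReal_le (v : ℝ≥0) {θ t : ℝ} (ht : |t - θ| ≤ 1) (x : ℝ) :
    |x - t| * gaussianPDFReal t v x ≤
      (√(2 * π * v))⁻¹ * exp (1 / (2 * v)) *
        ((|x - θ| + 1) * exp (-(4 * (v : ℝ))⁻¹ * (x - θ) ^ 2)) := by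
  rcases eq_or_ne v 0 with rfl | hv
  · simp
  have hv_pos : (0 : ℝ) < v := by positivity
  have hdist : |x - t| ≤ |x - θ| + 1 := by
    calc |x - t| ≤ |x - θ| + |θ - t| := abs_sub_le x θ t
      _ ≤ |x - θ| + 1 := by rw [abs_sub_comm θ t]; gcongr
  -- from `(x - θ)² ≤ 2 (x - t)² + 2 (t - θ)²`
  have hexp : -(x - t) ^ 2 / (2 * v) ≤ 1 / (2 * v) + -(4 * (v : ℝ))⁻¹ * (x - θ) ^ 2 := by
    have : (t - θ) ^ 2 ≤ 1 := by nlinarith [abs_nonneg (t - θ), sq_abs (t - θ)]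
    field_simp
    nlinarith [sq_nonneg (x + θ - 2 * t)]
  calc |x - t| * gaussianPDFReal t v x
      = (√(2 * π * v))⁻¹ * (|x - t| * exp (-(x - t) ^ 2 / (2 * v))) := by
        rw [gaussianPDFReal]; ring
    _ ≤ (√(2 * π * v))⁻¹ *
          ((|x - θ| + 1) * exp (1 / (2 * v) + -(4 * (v : ℝ))⁻¹ * (x - θ) ^ 2)) := by
        gcongr
    _ = _ := by rw [exp_add]; ring

lemma integrable_abs_add_one_mul_exp_neg_mul_sq {b : ℝ} (hb : 0 < b) (θ : ℝ) :
    Integrable fun x => (|x - θ| + 1) * exp (-b * (x - θ) ^ 2) := by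
  have h := (integrable_mul_exp_neg_mul_sq hb).norm.add (integrable_exp_neg_mul_sq hb)
  refine (h.comp_sub_right θ).congr (ae_of_all _ fun x => ?_)
  simp only [Pi.add_apply, norm_mul, Real.norm_eq_abs, abs_exp]
  ring

lemma hasDerivAt_integral_gaussianPDFReal_mul {v : ℝ≥0} (hv : v ≠ 0) {F : ℝ → ℝ}
    (hF : Measurable F) {C : ℝ} (hC : ∀ x, |F x| ≤ C) (θ : ℝ) :
    HasDerivAt (fun t => ∫ x, gaussianPDFReal t v x * F x)
      (∫ x, (x - θ) / v * gaussianPDFReal θ v x * F x) θ := by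
  have hv_pos : (0 : ℝ) < v := by positivity
  refine (hasDerivAt_integral_of_dominated_loc_of_deriv_le (Metric.closedBall_mem_nhds θ one_pos)
    (F' := fun t x => (x - t) / v * gaussianPDFReal t v x * F x)
    (bound := fun x => C / v * ((√(2 * π * v))⁻¹ * exp (1 / (2 * v)) *
        ((|x - θ| + 1) * exp (-(4 * (v : ℝ))⁻¹ * (x - θ) ^ 2))))
    (.of_forall fun t => by fun_prop)
    ((integrable_gaussianPDFReal θ v).mul_bdd hF.aestronglyMeasurable (ae_of_all _ hC))
    (by fun_prop) (ae_of_all _ fun x t ht => ?_)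
    (((integrable_abs_add_one_mul_exp_neg_mul_sq (by positivity) θ).const_mul _).const_mul _)
    (ae_of_all _ fun x t _ => (hasDerivAt_gaussianPDFReal_mean v x t).mul_const (F x))).2
  rw [Metric.mem_closedBall, Real.dist_eq] at ht
  calc ‖(x - t) / v * gaussianPDFReal t v x * F x‖
      = (|x - t| * gaussianPDFReal t v x) / v * |F x| := by
        rw [norm_mul, norm_mul, norm_div, Real.norm_eq_abs, Real.norm_eq_abs, Real.norm_eq_abs,
          Real.norm_eq_abs, abs_of_pos hv_pos, abs_of_nonneg (gaussianPDFReal_nonneg _ _ _)]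
        ring
    _ ≤ ((√(2 * π * v))⁻¹ * exp (1 / (2 * v)) *
          ((|x - θ| + 1) * exp (-(4 * (v : ℝ))⁻¹ * (x - θ) ^ 2))) / v * C := by
        gcongr ?_ / _ * ?_
        exacts [abs_sub_mul_gaussianPDFReal_le v ht x, hC x]
    _ = _ := by ring

lemma integral_comp_const_add_gaussianReal {E : Type*} [NormedAddCommGroup E] [NormedSpace ℝ E]
    (v : ℝ≥0) (F : ℝ → E) (t : ℝ) :
    ∫ ε, F (t + ε) ∂gaussianReal 0 v = ∫ x, F x ∂gaussianReal t v := by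
  rw [← zero_add t, ← gaussianReal_map_const_add, (measurableEmbedding_addLeft t).integral_map]
  simp

theorem hasDerivAt_integral_comp_add_gaussianReal {v : ℝ≥0} (hv : v ≠ 0) {F : ℝ → ℝ}
    (hF : Measurable F) {C : ℝ} (hC : ∀ x, |F x| ≤ C) (θ : ℝ) :
    HasDerivAt (fun t => ∫ ε, F (t + ε) ∂gaussianReal 0 v)
      ((v : ℝ)⁻¹ * ∫ ε, ε * F (θ + ε) ∂gaussianReal 0 v) θ := by
  have hsmooth : (fun t => ∫ ε, F (t + ε) ∂gaussianReal 0 v) =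
      fun t => ∫ x, gaussianPDFReal t v x * F x := by
    funext t
    rw [integral_comp_const_add_gaussianReal, integral_gaussianReal_eq_integral_smul hv]
    rfl
  have hvalue : ∫ x, (x - θ) / v * gaussianPDFReal θ v x * F x =
      (v : ℝ)⁻¹ * ∫ ε, ε * F (θ + ε) ∂gaussianReal 0 v := by
    have hshift :
        ∫ ε, ε * F (θ + ε) ∂gaussianReal 0 v = ∫ x, (x - θ) * F x ∂gaussianReal θ v := by
      rw [← integral_comp_const_add_gaussianReal v (fun x => (x - θ) * F x) θ]
      simp
    rw [hshift, integral_gaussianReal_eq_integral_smul hv, ← integral_const_mul]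
    congr with x
    simp only [smul_eq_mul]
    ring
  rw [hsmooth, ← hvalue]
  exact hasDerivAt_integral_gaussianPDFReal_mul hv hF hC θ

lemma integral_sum_comp_eval_pi {ι X E : Type*} [Fintype ι] [MeasurableSpace X]
    [NormedAddCommGroup E] [NormedSpace ℝ E] {μ : Measure X} [IsProbabilityMeasure μ] {g : X → E}
    (hg : Integrable g μ) :
    ∫ x, ∑ i, g (x i) ∂Measure.pi (fun _ : ι => μ) = Fintype.card ι • ∫ y, g y ∂μ := by
  rw [integral_finsetSum _ fun i _ => integrable_comp_eval hg,
    Finset.sum_congr rfl fun i _ =>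
      integral_comp_eval (μ := fun _ : ι => μ) hg.aestronglyMeasurable]
  simp

/-- The Monte-Carlo estimator `g(ε) = (1/(mσ²)) Σ_k ε_k · F(θ + ε_k)`, with `ε_1, …, ε_m`
i.i.d. `N(0, σ²)` samples, is an unbiased estimator of the gradient of the smoothed objective
`θ ↦ ∫ F(θ + ε) d(gaussianReal 0 σ²)(ε)`. -/
theorem monte_carlo_gradient_unbiased
    (σ : ℝ) (hσ : 0 < σ) (m : ℕ) (hm : 1 ≤ m) (θ : ℝ) (F : ℝ → ℝ)
    (hF_meas : Measurable F) (hF_bdd : ∃ C : ℝ, ∀ x, |F x| ≤ C) :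
    ∫ ε : Fin m → ℝ,
        (1 / (m * σ ^ 2)) * ∑ k : Fin m, ε k * F (θ + ε k)
        ∂(Measure.pi fun _ : Fin m => gaussianReal 0 (Real.toNNReal (σ ^ 2)))
      =
      deriv (fun t : ℝ => ∫ ε, F (t + ε) ∂(gaussianReal 0 (Real.toNNReal (σ ^ 2)))) θ := by
  obtain ⟨C, hC⟩ := hF_bdd
  have hv : (σ ^ 2).toNNReal ≠ 0 := by simpa using hσ.ne'
  have hm₀ : (m : ℝ) ≠ 0 := Nat.cast_ne_zero.mpr (Nat.one_le_iff_ne_zero.mp hm)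
  have hsample : Integrable (fun ε => ε * F (θ + ε)) (gaussianReal 0 (σ ^ 2).toNNReal) :=
    ((memLp_id_gaussianReal 1).integrable le_rfl).mul_bdd
      (hF_meas.comp (measurable_const_add θ)).aestronglyMeasurable (ae_of_all _ fun ε => hC _)
  rw [(hasDerivAt_integral_comp_add_gaussianReal hv hF_meas hC θ).deriv, integral_const_mul,
    integral_sum_comp_eval_pi hsample, Real.coe_toNNReal _ (sq_nonneg σ), Fintype.card_fin,
    nsmul_eq_mul]
  field_simp
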